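/- arXiv:1506.07480 — 9 statements merged into one kernel-verified Lean document; each statement's English description precedes it below -/
import Mathlib

section
/- Let λ > 1 and β > 0, and let {a_n} be a sequence of real numbers with a_0 = 0 satisfying λ^{2n} a_n - λ^{βn} a_{n-1}^2 + λ^{β(n+1)} a_n a_{n+1} = 0 for all n ≥ 1. If a_{n_1} ≠ 0 for some n_1, then a_n ≤ -λ^{(2-β)n - 2} for all n > n_1. -/
theorem stmt_1 (l β : ℝ) (hl : 1 < l) (hβ : 0 < β) (a : ℕ → ℝ) (ha0 : a 0 = 0)
    (heq : ∀ n : ℕ, 1 ≤ n →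
      l ^ ((2 : ℝ) * n) * a n - l ^ (β * n) * (a (n - 1)) ^ 2
        + l ^ (β * ((n : ℝ) + 1)) * a n * a (n + 1) = 0)
    (n₁ : ℕ) (h : a n₁ ≠ 0) :
    ∀ n : ℕ, n₁ < n → a n ≤ -l ^ ((2 - β) * n - 2) := by
  classical
  have hl0 : (0 : ℝ) < l := lt_trans one_pos hl
  have hne : ∃ k, a k ≠ 0 := ⟨n₁, h⟩
  set m := Nat.find hne with hmdef
  have hm : a m ≠ 0 := Nat.find_spec hne
  have hm1 : 1 ≤ m := by
    rcases Nat.eq_zero_or_pos m with h0 | h0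
    · exact absurd (by rw [h0]; exact ha0) hm
    · exact h0
  have hmn₁ : m ≤ n₁ := Nat.find_min' hne h
  have hprev : a (m - 1) = 0 := by
    have := Nat.find_min hne (show m - 1 < m by omega)
    simpa using this
  -- key step lemma
  have key : ∀ n : ℕ, 1 ≤ n → a n < 0 →
      a (n + 1) ≤ -l ^ ((2 - β) * ((n + 1 : ℕ) : ℝ) - 2) := by
    intro n hn han
    have he := heq n hn
    have hb : 0 < l ^ (β * ((n : ℝ) + 1)) := Real.rpow_pos_of_pos hl0 _
    have hq : 0 ≤ l ^ (β * (n : ℝ)) * (a (n - 1)) ^ 2 :=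
      mul_nonneg (Real.rpow_pos_of_pos hl0 _).le (sq_nonneg _)
    have h1 : l ^ (β * ((n : ℝ) + 1)) * a n * a (n + 1)
        ≥ -(l ^ ((2 : ℝ) * n) * a n) := by linarith
    have hX : l ^ (β * ((n : ℝ) + 1)) * a (n + 1) + l ^ ((2 : ℝ) * n) ≤ 0 := by
      nlinarith
    have hexp : (2 - β) * ((n + 1 : ℕ) : ℝ) - 2 = 2 * (n : ℝ) - β * ((n : ℝ) + 1) := by
      push_cast; ring
    rw [hexp, Real.rpow_sub hl0, le_neg, div_le_iff₀ hb]
    linarith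
  -- base: a (m+1) = - l ^ (2m - β(m+1))
  have base : a (m + 1) ≤ -l ^ ((2 - β) * ((m + 1 : ℕ) : ℝ) - 2) := by
    have he := heq m hm1
    rw [hprev] at he
    have hb : 0 < l ^ (β * ((m : ℝ) + 1)) := Real.rpow_pos_of_pos hl0 _
    have hfac : l ^ ((2 : ℝ) * m) + l ^ (β * ((m : ℝ) + 1)) * a (m + 1) = 0 := by
      have : a m * (l ^ ((2 : ℝ) * m) + l ^ (β * ((m : ℝ) + 1)) * a (m + 1)) = 0 := by
        ring_nf
        ring_nf at he
        linarith
      rcases mul_eq_zero.mp this with h' | h'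
      · exact absurd h' hm
      · exact h'
    have hexp : (2 - β) * ((m + 1 : ℕ) : ℝ) - 2 = 2 * (m : ℝ) - β * ((m : ℝ) + 1) := by
      push_cast; ring
    rw [hexp, Real.rpow_sub hl0, le_neg, div_le_iff₀ hb]
    linarith
  have main : ∀ n : ℕ, m + 1 ≤ n → a n ≤ -l ^ ((2 - β) * n - 2) := by
    intro n hn
    induction n, hn using Nat.le_induction with
    | base => exact base
    | succ n hn ih =>
      have han : a n < 0 := by
        have : (0 : ℝ) < l ^ ((2 - β) * (n : ℝ) - 2) := Real.rpow_pos_of_pos hl0 _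
        linarith
      exact key n (by omega) han
  intro n hn
  exact main n (by omega)
end

section
/- Let 0 < u < 1, and set κ = 1/2 + sqrt(1/4 + 1/u). Let δ > 0 satisfy κδ < u/(1-u). If c_0 ≥ 1/(1-u) - δ and c_1 ≥ 1/(1-u) - κδ (so c_0, c_1 > 1), and c_2 = sqrt(c_1(c_0 - 1)/u), then c_2 ≥ 1/(1-u) - κ²δ. -/
theorem stmt_3 (u : ℝ) (hu0 : 0 < u) (hu1 : u < 1)
    (κ : ℝ) (hκ : κ = 1 / 2 + Real.sqrt (1 / 4 + 1 / u))
    (δ : ℝ) (hδ : 0 < δ) (hδκ : κ * δ < u / (1 - u))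
    (c₀ c₁ c₂ : ℝ) (hc₀ : c₀ ≥ 1 / (1 - u) - δ) (hc₁ : c₁ ≥ 1 / (1 - u) - κ * δ)
    (hc₂ : c₂ = Real.sqrt (c₁ * (c₀ - 1) / u)) :
    c₂ ≥ 1 / (1 - u) - κ ^ 2 * δ := by
  have ht : (0:ℝ) < 1 - u := by linarith
  have hu' : (0:ℝ) < 1 / u := by positivity
  have hsq : Real.sqrt (1 / 4 + 1 / u) ^ 2 = 1 / 4 + 1 / u := by
    rw [Real.sq_sqrt]; positivity
  have hκ1 : 1 < κ := by
    have h12 : (1:ℝ)/2 < Real.sqrt (1 / 4 + 1 / u) := by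
      rw [show (1:ℝ)/2 = Real.sqrt (1/4) by
        rw [show (1:ℝ)/4 = (1/2)^2 by norm_num, Real.sqrt_sq]; norm_num]
      exact Real.sqrt_lt_sqrt (by norm_num) (by linarith)
    rw [hκ]; linarith
  have hκ2 : u * κ ^ 2 = u * κ + 1 := by
    have hk : κ ^ 2 = κ + 1 / u := by rw [hκ]; linear_combination hsq
    have : u * κ ^ 2 = u * (κ + 1 / u) := by rw [hk]
    rw [this, mul_add, mul_one_div, div_self hu0.ne']
  -- case split on sign of RHS
  rcases le_or_gt (1 / (1 - u) - κ ^ 2 * δ) 0 with hneg | h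
  · rw [hc₂]; exact le_trans hneg (Real.sqrt_nonneg _)
  -- key polynomial bounds with e := δ*(1-u)
  have h1 : κ * δ * (1 - u) < u := (lt_div_iff₀ ht).mp hδκ
  have h2 : κ ^ 2 * δ * (1 - u) < 1 := (lt_div_iff₀ ht).mp (by linarith)
  -- u * κ^2 ≥ 1 + u  since κ ≥ 1
  have h4 : 1 + u ≤ u * κ ^ 2 := by nlinarith [hκ2, hκ1, hu0]
  -- δ*(1-u)*(1+u) < u
  have h3 : δ * (1 - u) * (1 + u) < u := by nlinarith [h2, h4, sq_nonneg κ, mul_pos hδ ht]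
  -- the polynomial inequality
  have hprod : 0 ≤ δ * (1 - u) * κ ^ 2 * (u - δ * (1 - u) * (1 + u)) :=
    mul_nonneg (by positivity) (by linarith)
  have hpoly : u * (1 - κ ^ 2 * (δ * (1 - u))) ^ 2 ≤
      (1 - κ * (δ * (1 - u))) * (u - δ * (1 - u)) := by
    have expand : (1 - κ * (δ * (1 - u))) * (u - δ * (1 - u)) -
        u * (1 - κ ^ 2 * (δ * (1 - u))) ^ 2 =
        δ * (1 - u) * κ ^ 2 * (u - δ * (1 - u) * (1 + u)) +
        (δ * (1 - u)) * (1 - δ * (1 - u) * (κ ^ 2 + κ)) * (u * κ ^ 2 - u * κ - 1) := by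
      ring
    have hz : u * κ ^ 2 - u * κ - 1 = 0 := by linarith
    rw [hz, mul_zero, add_zero] at expand
    linarith
  -- bound in terms of 1/(1-u)
  have hP : u * (1 / (1 - u) - κ ^ 2 * δ) ^ 2 ≤ (1 / (1 - u) - κ * δ) * (u / (1 - u) - δ) := by
    rw [← sub_nonneg]
    have expand : (1 / (1 - u) - κ * δ) * (u / (1 - u) - δ) -
        u * (1 / (1 - u) - κ ^ 2 * δ) ^ 2 =
        ((1 - κ * (δ * (1 - u))) * (u - δ * (1 - u)) -
          u * (1 - κ ^ 2 * (δ * (1 - u))) ^ 2) / (1 - u) ^ 2 := by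
      field_simp
    rw [expand]
    exact div_nonneg (by linarith) (by positivity)
  -- lower bounds on factors
  have hA : 0 < 1 / (1 - u) - κ * δ := by
    have : u / (1 - u) < 1 / (1 - u) := (div_lt_div_iff_of_pos_right ht).mpr hu1
    linarith
  have hB : 0 < u / (1 - u) - δ := by
    have : δ < κ * δ := by nlinarith
    have := hδκ
    linarith
  have hchain : (1 / (1 - u) - κ * δ) * (u / (1 - u) - δ) ≤ c₁ * (c₀ - 1) := by
    have hc0' : u / (1 - u) - δ ≤ c₀ - 1 := by
      have : 1 / (1 - u) - u / (1 - u) = 1 := by field_simp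
      linarith
    exact mul_le_mul hc₁ hc0' hB.le (by linarith)
  have key : (1 / (1 - u) - κ ^ 2 * δ) ^ 2 ≤ c₁ * (c₀ - 1) / u := by
    rw [le_div_iff₀ hu0]
    calc (1 / (1 - u) - κ ^ 2 * δ) ^ 2 * u = u * (1 / (1 - u) - κ ^ 2 * δ) ^ 2 := by ring
      _ ≤ (1 / (1 - u) - κ * δ) * (u / (1 - u) - δ) := hP
      _ ≤ c₁ * (c₀ - 1) := hchain
  rw [hc₂]
  calc 1 / (1 - u) - κ ^ 2 * δ = Real.sqrt ((1 / (1 - u) - κ ^ 2 * δ) ^ 2) := by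
        rw [Real.sqrt_sq h.le]
    _ ≤ Real.sqrt (c₁ * (c₀ - 1) / u) := Real.sqrt_le_sqrt key
end

section
/- Let 0 < u < 1, and set ν = (1 + sqrt(1 + 8/u))/4. Let δ > 0 satisfy νδ < u/(1-u). If 1 < c_0 ≤ 1/(1-u) - δ and 1 < c_1 ≤ 1/(1-u) - νδ, and c_2 = sqrt(c_1(c_0 - 1)/u), then c_2 ≤ 1/(1-u) - ν²δ. -/
/-!
With `A = 1/(1-u)` we have `A - 1 = uA`, so the hypotheses give `c₀ - 1 ≤ uA - δ` and
`c₁ ≤ A - νδ`, and it suffices that `(A - νδ)(uA - δ) ≤ u(A - ν²δ)²`. The difference of the two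
sides is `Aδ(1 - uν(2ν - 1)) + νδ²(uν³ - 1)`. The number `ν` is the positive root of
`2uν² - uν - 1 = 0`, which kills the first term, and then `uν³ ≥ uν(2ν - 1) = 1` because
`ν² - (2ν - 1) = (ν - 1)²`.
-/

section Root

variable {u ν : ℝ}

lemma mul_mul_two_mul_sub_one_eq_one (hu : 0 < u) (hν : ν = (1 + √(1 + 8 / u)) / 4) :
    u * ν * (2 * ν - 1) = 1 := by
  have hs : √(1 + 8 / u) ^ 2 = 1 + 8 / u := Real.sq_sqrt (by positivity)
  calc u * ν * (2 * ν - 1) = u * ((√(1 + 8 / u) ^ 2 - 1) / 8) := by rw [hν]; ring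
    _ = 1 := by rw [hs]; field_simp; ring

lemma one_lt_of_eq_root (hu0 : 0 < u) (hu1 : u < 1) (hν : ν = (1 + √(1 + 8 / u)) / 4) :
    1 < ν := by
  have h8 : 8 < 8 / u := by rw [lt_div_iff₀ hu0]; nlinarith
  have h3 : 3 < √(1 + 8 / u) := by rw [Real.lt_sqrt (by norm_num)]; linarith
  linarith

lemma one_le_mul_pow_three (hu : 0 < u) (hν : 0 ≤ ν) (hroot : u * ν * (2 * ν - 1) = 1) :
    1 ≤ u * ν ^ 3 := by
  have : 0 ≤ u * ν * (ν - 1) ^ 2 := by positivity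
  linarith

lemma mul_lt_one_of_root (hν : 1 < ν) (hroot : u * ν * (2 * ν - 1) = 1) :
    u * ν < 1 := by
  nlinarith

end Root

lemma mul_sub_le_mul_sub_sq {u ν A δ : ℝ} (hν : 0 ≤ ν) (hroot : u * ν * (2 * ν - 1) = 1)
    (hcube : 1 ≤ u * ν ^ 3) :
    (A - ν * δ) * (u * A - δ) ≤ u * (A - ν ^ 2 * δ) ^ 2 := by
  have : 0 ≤ ν * δ ^ 2 * (u * ν ^ 3 - 1) :=
    mul_nonneg (mul_nonneg hν (sq_nonneg δ)) (by linarith)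
  linear_combination this + A * δ * hroot

theorem stmt_4_general (u : ℝ) (hu0 : 0 < u) (hu1 : u < 1)
    (ν : ℝ) (hν : ν = (1 + Real.sqrt (1 + 8 / u)) / 4)
    (δ : ℝ) (hδν : ν * δ < u / (1 - u))
    (c₀ c₁ c₂ : ℝ) (hc₀l : 1 < c₀) (hc₀ : c₀ ≤ 1 / (1 - u) - δ)
    (hc₁ : c₁ ≤ 1 / (1 - u) - ν * δ)
    (hc₂ : c₂ = Real.sqrt (c₁ * (c₀ - 1) / u)) :
    c₂ ≤ 1 / (1 - u) - ν ^ 2 * δ := by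
  have hroot := mul_mul_two_mul_sub_one_eq_one hu0 hν
  have hν1 := one_lt_of_eq_root hu0 hu1 hν
  have huν := mul_lt_one_of_root hν1 hroot
  set A := 1 / (1 - u)
  have hA : u / (1 - u) = u * A := by ring
  have h1u : 0 < 1 - u := by linarith
  have hApos : 0 < A := by positivity
  have hA1 : A * (1 - u) = 1 := by simp only [A]; field_simp
  rw [hA] at hδν
  have hν2 : ν ^ 2 * δ < A := by nlinarith [mul_lt_mul_of_pos_left hδν (by linarith : 0 < ν)]
  rw [hc₂, Real.sqrt_le_left (by linarith), div_le_iff₀ hu0]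
  calc c₁ * (c₀ - 1) ≤ (A - ν * δ) * (u * A - δ) :=
        mul_le_mul hc₁ (by linarith) (by linarith) (by nlinarith)
    _ ≤ u * (A - ν ^ 2 * δ) ^ 2 :=
      mul_sub_le_mul_sub_sq (by linarith) hroot (one_le_mul_pow_three hu0 (by linarith) hroot)
    _ = (A - ν ^ 2 * δ) ^ 2 * u := mul_comm _ _

theorem stmt_4 (u : ℝ) (hu0 : 0 < u) (hu1 : u < 1)
    (ν : ℝ) (hν : ν = (1 + Real.sqrt (1 + 8 / u)) / 4)
    (δ : ℝ) (hδ : 0 < δ) (hδν : ν * δ < u / (1 - u))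
    (c₀ c₁ c₂ : ℝ) (hc₀l : 1 < c₀) (hc₀ : c₀ ≤ 1 / (1 - u) - δ)
    (hc₁l : 1 < c₁) (hc₁ : c₁ ≤ 1 / (1 - u) - ν * δ)
    (hc₂ : c₂ = Real.sqrt (c₁ * (c₀ - 1) / u)) :
    c₂ ≤ 1 / (1 - u) - ν ^ 2 * δ :=
  stmt_4_general u hu0 hu1 ν hν δ hδν c₀ c₁ c₂ hc₀l hc₀ hc₁ hc₂
end

section
/- Let 0 < u < 1. There exists an infinite sequence (b_k)_{k≥1} of positive reals with b_2 = 1, satisfying b_k b_{k+1} = b_k + u b_{k-1}^2 for all k ≥ 2 (equivalently b_{k+1} = 1 + u b_{k-1}^2 / b_k), and such that b_k ≤ 1/(1-u) for all k. -/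
/-!
Shooting in the first term. Let `M = 1/(1-u)`, so that `M = 1 + u M`, and run the recurrence from
`(b₁, b₂) = (a, 1)` with `0 ≤ a ≤ M`. Once a term exceeds `M`, the next one is at most `M` and the
one after exceeds `M` again, so all indices at which the orbit exceeds `M` have the same parity.
If every `a ∈ (0, M]` eventually exceeded `M`, so would `a = 0`, whose orbit is that of `a = 1`
shifted by one step; then `[0, M]` would be covered by the open sets of parameters exceeding `M`
at an odd, resp. even, index. These are disjoint, the first contains `M`, and the second contains
`0` or `1`, contradicting the connectedness of `[0, M]`.
-/

namespace QuadraticRecurrence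

noncomputable def step (u : ℝ) (p : ℝ × ℝ) : ℝ × ℝ := (p.2, 1 + u * p.1 ^ 2 / p.2)

/-- `orbit u a n = (b_{n+1}, b_{n+2})` for the sequence with `b₁ = a`, `b₂ = 1`. -/
noncomputable def orbit (u a : ℝ) (n : ℕ) : ℝ × ℝ := (step u)^[n] (a, 1)

variable {u a M : ℝ}

@[simp] lemma orbit_zero : orbit u a 0 = (a, 1) := rfl

lemma orbit_succ (n : ℕ) : orbit u a (n + 1) = step u (orbit u a n) :=
  Function.iterate_succ_apply' _ _ _

@[simp] lemma orbit_succ_fst (n : ℕ) : (orbit u a (n + 1)).1 = (orbit u a n).2 := by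
  rw [orbit_succ]; rfl

@[simp] lemma orbit_succ_snd (n : ℕ) :
    (orbit u a (n + 1)).2 = 1 + u * (orbit u a n).1 ^ 2 / (orbit u a n).2 := by
  rw [orbit_succ]; rfl

lemma orbit_zero_succ (n : ℕ) : orbit u 0 (n + 1) = orbit u 1 n := by
  rw [orbit, orbit, Function.iterate_succ_apply]
  simp [step]

lemma one_le_orbit_snd (hu : 0 ≤ u) (n : ℕ) : 1 ≤ (orbit u a n).2 := by
  induction n with
  | zero => simp
  | succ n ih =>
    rw [orbit_succ_snd]
    have := div_nonneg (mul_nonneg hu (sq_nonneg (orbit u a n).1)) (zero_le_one.trans ih)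
    linarith

lemma orbit_snd_pos (hu : 0 ≤ u) (n : ℕ) : 0 < (orbit u a n).2 :=
  one_pos.trans_le (one_le_orbit_snd hu n)

lemma orbit_fst_nonneg (hu : 0 ≤ u) (ha : 0 ≤ a) : ∀ n, 0 ≤ (orbit u a n).1
  | 0 => ha
  | n + 1 => by rw [orbit_succ_fst]; exact (orbit_snd_pos hu n).le

lemma orbit_snd_mul_orbit_succ_snd (hu : 0 ≤ u) (n : ℕ) :
    (orbit u a n).2 * (orbit u a (n + 1)).2 = (orbit u a n).2 + u * (orbit u a n).1 ^ 2 := by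
  have := (orbit_snd_pos (a := a) hu n).ne'
  rw [orbit_succ_snd]
  field_simp

lemma continuous_orbit (hu : 0 ≤ u) (n : ℕ) : Continuous fun a => orbit u a n := by
  induction n with
  | zero => exact continuous_id.prodMk continuous_const
  | succ n ih =>
    simp only [orbit_succ, step]
    exact ih.snd.prodMk <| continuous_const.add <|
      (continuous_const.mul (ih.fst.pow 2)).div ih.snd fun _ => (orbit_snd_pos hu n).ne'

lemma step_le_of_le_of_lt (hu : 0 ≤ u) (hfix : 1 + u * M = M) {x y : ℝ} (hx0 : 0 ≤ x)
    (hxM : x ≤ M) (hMy : M < y) : 1 + u * x ^ 2 / y ≤ M := by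
  have hy : 0 < y := hx0.trans_lt (hxM.trans_lt hMy)
  have hxy : x ^ 2 ≤ M * y := by nlinarith
  have : u * x ^ 2 / y ≤ u * M := by
    rw [div_le_iff₀ hy, mul_assoc]
    exact mul_le_mul_of_nonneg_left hxy hu
  linarith

lemma lt_step_of_lt_of_le (hu : 0 < u) (hM : 0 ≤ M) (hfix : 1 + u * M = M) {x y : ℝ}
    (hMx : M < x) (hy : 0 < y) (hyM : y ≤ M) : M < 1 + u * x ^ 2 / y := by
  have hxy : M * y < x ^ 2 := by nlinarith
  have : u * M < u * x ^ 2 / y := by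
    rw [lt_div_iff₀ hy, mul_assoc]
    exact mul_lt_mul_of_pos_left hxy hu
  linarith

lemma orbit_fst_le_or_snd_le (hu : 0 ≤ u) (hfix : 1 + u * M = M) (ha : a ∈ Set.Icc 0 M) :
    ∀ n, (orbit u a n).1 ≤ M ∨ (orbit u a n).2 ≤ M
  | 0 => Or.inl ha.2
  | n + 1 => by
    rw [orbit_succ_fst, orbit_succ_snd]
    refine (le_or_gt _ M).imp id fun hMy => ?_
    have hxM := (orbit_fst_le_or_snd_le hu hfix ha n).resolve_right hMy.not_ge
    exact step_le_of_le_of_lt hu hfix (orbit_fst_nonneg hu ha.1 n) hxM hMy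

lemma orbit_succ_snd_le (hu : 0 ≤ u) (hfix : 1 + u * M = M) (ha : a ∈ Set.Icc 0 M) {n : ℕ}
    (h : M < (orbit u a n).2) : (orbit u a (n + 1)).2 ≤ M := by
  simpa [h.not_ge] using orbit_fst_le_or_snd_le hu hfix ha (n + 1)

lemma lt_orbit_add_two_snd (hu : 0 < u) (hM : 0 ≤ M) (hfix : 1 + u * M = M)
    (ha : a ∈ Set.Icc 0 M) {n : ℕ} (h : M < (orbit u a n).2) : M < (orbit u a (n + 2)).2 := by
  rw [orbit_succ_snd, orbit_succ_fst]
  exact lt_step_of_lt_of_le hu hM hfix h (orbit_snd_pos hu.le _)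
    (orbit_succ_snd_le hu.le hfix ha h)

lemma lt_orbit_add_mul_two_snd (hu : 0 < u) (hM : 0 ≤ M) (hfix : 1 + u * M = M)
    (ha : a ∈ Set.Icc 0 M) {n : ℕ} (h : M < (orbit u a n).2) :
    ∀ j, M < (orbit u a (n + 2 * j)).2
  | 0 => h
  | j + 1 => lt_orbit_add_two_snd hu hM hfix ha (lt_orbit_add_mul_two_snd hu hM hfix ha h j)

lemma mod_two_eq_of_lt_orbit_snd (hu : 0 < u) (hM : 0 ≤ M) (hfix : 1 + u * M = M)
    (ha : a ∈ Set.Icc 0 M) {n₁ n₂ : ℕ} (h₁ : M < (orbit u a n₁).2) (h₂ : M < (orbit u a n₂).2) :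
    n₁ % 2 = n₂ % 2 := by
  have key : ∀ {m : ℕ}, M < (orbit u a m).2 → ∀ j, (orbit u a (m + 2 * j + 1)).2 ≤ M :=
    fun h j => orbit_succ_snd_le hu.le hfix ha (lt_orbit_add_mul_two_snd hu hM hfix ha h j)
  by_contra hne
  rcases le_total n₁ n₂ with hle | hle
  · obtain ⟨j, rfl⟩ : ∃ j, n₂ = n₁ + 2 * j + 1 := ⟨(n₂ - n₁) / 2, by omega⟩
    exact (key h₁ j).not_gt h₂
  · obtain ⟨j, rfl⟩ : ∃ j, n₁ = n₂ + 2 * j + 1 := ⟨(n₁ - n₂) / 2, by omega⟩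
    exact (key h₂ j).not_gt h₁

lemma exists_orbit_snd_le (hu : 0 < u) (hM : 1 < M) (hfix : 1 + u * M = M) :
    ∃ a ∈ Set.Ioc 0 M, ∀ n, (orbit u a n).2 ≤ M := by
  by_contra! hbad
  let E : ℕ → Set ℝ := fun r => ⋃ n ∈ {n : ℕ | n % 2 = r}, {a | M < (orbit u a n).2}
  have mem_E {r : ℕ} {a : ℝ} (n : ℕ) (hn : n % 2 = r) (h : M < (orbit u a n).2) : a ∈ E r :=
    Set.mem_biUnion hn h
  have isOpen_E (r : ℕ) : IsOpen (E r) :=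
    isOpen_biUnion fun n _ => isOpen_lt continuous_const (continuous_orbit hu.le n).snd
  obtain ⟨n₁, hn₁⟩ := hbad 1 ⟨one_pos, hM.le⟩
  have hexceed : ∀ a ∈ Set.Icc 0 M, ∃ n, M < (orbit u a n).2 := by
    rintro a ⟨ha0, haM⟩
    rcases ha0.eq_or_lt with rfl | ha0
    · exact ⟨n₁ + 1, by rwa [orbit_zero_succ]⟩
    · exact hbad a ⟨ha0, haM⟩
  have hcover : Set.Icc 0 M ⊆ E 1 ∪ E 0 := fun a ha =>
    let ⟨n, hn⟩ := hexceed a ha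
    (Nat.mod_two_eq_zero_or_one n).symm.imp (mem_E n · hn) (mem_E n · hn)
  have hM_E : M ∈ E 1 := by
    refine mem_E (0 + 1) rfl ?_
    rw [orbit_succ_snd, orbit_zero, div_one]
    nlinarith [mul_lt_mul_of_pos_left (lt_mul_self hM) hu]
  have hE : ∃ a ∈ Set.Icc 0 M, a ∈ E 0 := by
    rcases Nat.mod_two_eq_zero_or_one n₁ with h | h
    · exact ⟨1, ⟨zero_le_one, hM.le⟩, mem_E n₁ h hn₁⟩
    · exact ⟨0, ⟨le_rfl, by linarith⟩, mem_E (n₁ + 1) (by omega) (by rwa [orbit_zero_succ])⟩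
  obtain ⟨a, ha, hE₁, hE₀⟩ := isPreconnected_Icc (E 1) (E 0) (isOpen_E 1) (isOpen_E 0) hcover
    ⟨M, ⟨by linarith, le_rfl⟩, hM_E⟩ hE
  obtain ⟨n, hn : n % 2 = 1, h⟩ := Set.mem_iUnion₂.mp hE₁
  obtain ⟨n', hn' : n' % 2 = 0, h'⟩ := Set.mem_iUnion₂.mp hE₀
  have := mod_two_eq_of_lt_orbit_snd hu (by linarith) hfix ha h h'
  omega

end QuadraticRecurrence

open QuadraticRecurrence in
theorem stmt_6 (u : ℝ) (hu0 : 0 < u) (hu1 : u < 1) :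
    ∃ b : ℕ → ℝ, (∀ k : ℕ, 1 ≤ k → 0 < b k) ∧ b 2 = 1 ∧
      (∀ k : ℕ, 2 ≤ k → b k * b (k + 1) = b k + u * (b (k - 1)) ^ 2) ∧
      (∀ k : ℕ, 1 ≤ k → b k ≤ 1 / (1 - u)) := by
  have hu : 0 < 1 - u := by linarith
  have hM : 1 < 1 / (1 - u) := by rw [lt_div_iff₀ hu]; linarith
  have hfix : 1 + u * (1 / (1 - u)) = 1 / (1 - u) := by field_simp; ring
  obtain ⟨a, ⟨ha0, haM⟩, hbound⟩ := exists_orbit_snd_le hu0 hM hfix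
  refine ⟨fun k => (orbit u a (k - 1)).1, ?_, rfl, ?_, ?_⟩
  · rintro (_ | _ | k) hk
    · omega
    · exact ha0
    · simpa using orbit_snd_pos hu0.le k
  · rintro (_ | _ | k) hk
    · omega
    · omega
    · simpa using orbit_snd_mul_orbit_succ_snd hu0.le k
  · rintro (_ | _ | k) hk
    · omega
    · exact haM
    · simpa using hbound k
end

section
/- Let b_1, b_2 > 0 and define b_{n+1} = 1 + b_{n-1}^2 / b_n for n ≥ 2. Then the sequence (b_n) is unbounded. -/
theorem stmt_7 (b : ℕ → ℝ) (hb1 : 0 < b 1) (hb2 : 0 < b 2)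
    (hrec : ∀ n : ℕ, 2 ≤ n → b (n + 1) = 1 + (b (n - 1)) ^ 2 / b n) :
    ¬ ∃ M : ℝ, ∀ n : ℕ, 1 ≤ n → b n ≤ M := by
  rintro ⟨M, hM⟩
  -- positivity
  have pos : ∀ n : ℕ, 0 < b (n + 1) ∧ 0 < b (n + 2) := by
    intro n
    induction n with
    | zero => exact ⟨hb1, hb2⟩
    | succ k ih =>
      refine ⟨ih.2, ?_⟩
      have h := hrec (k + 2) (by omega)
      have hk : k + 2 - 1 = k + 1 := by omega
      rw [hk] at h
      have hd : 0 ≤ (b (k + 1)) ^ 2 / b (k + 2) := div_nonneg (sq_nonneg _) ih.2.le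
      rw [h]; linarith
  -- key growth estimate
  have key : ∀ n : ℕ, (n : ℝ) + 1 + 2 * b 1 + b 2 ≤ 2 * b (n + 2) + b (n + 3) := by
    intro n
    induction n with
    | zero =>
      have h := hrec 2 (by omega)
      norm_num at h
      have hq : 0 ≤ (b 2 - b 1) ^ 2 / b 2 := div_nonneg (sq_nonneg _) hb2.le
      have he : (b 2 - b 1) ^ 2 / b 2 = b 2 + (b 1) ^ 2 / b 2 - 2 * b 1 := by
        field_simp; ring
      rw [h]; push_cast; linarith [he ▸ hq]
    | succ k ih =>
      have h := hrec (k + 3) (by omega)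
      have hk : k + 3 - 1 = k + 2 := by omega
      rw [hk] at h
      have h3 : 0 < b (k + 3) := (pos (k + 1)).2
      have hq : 0 ≤ (b (k + 3) - b (k + 2)) ^ 2 / b (k + 3) :=
        div_nonneg (sq_nonneg _) h3.le
      have he : (b (k + 3) - b (k + 2)) ^ 2 / b (k + 3)
          = b (k + 3) + (b (k + 2)) ^ 2 / b (k + 3) - 2 * b (k + 2) := by
        field_simp; ring
      have hamgm : 2 * b (k + 2) ≤ b (k + 3) + (b (k + 2)) ^ 2 / b (k + 3) := by
        linarith [he ▸ hq]
      have : b (k + 1 + 3) = 1 + (b (k + 2)) ^ 2 / b (k + 3) := h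
      push_cast
      rw [show k + 1 + 3 = k + 4 from rfl] at this
      rw [show k + 1 + 2 = k + 3 from rfl]
      rw [show k + 1 + 3 = k + 4 from rfl]
      rw [this]
      push_cast at ih
      linarith
  obtain ⟨n, hn⟩ := exists_nat_gt (3 * M)
  have h1 := hM (n + 2) (by omega)
  have h2 := hM (n + 3) (by omega)
  have := key n
  linarith
end

section
/- Let c_0 ≤ A and c_1 ≤ A - 1/3 with c_1 > 0, and define the backward sequence c_{k+1} = sqrt(c_k(c_{k-1} - 1)) as long as c_{k-1} > 1. Then for every k for which c_k is defined, c_k ≤ A - k/3. -/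
theorem stmt_8 (A : ℝ) (c : ℕ → ℝ) (n : ℕ)
    (hc0 : c 0 ≤ A) (hc1 : c 1 ≤ A - 1 / 3) (hc1pos : 0 < c 1)
    (hdef : ∀ k : ℕ, 1 ≤ k → k + 1 ≤ n → 1 < c (k - 1))
    (hrec : ∀ k : ℕ, 1 ≤ k → k + 1 ≤ n → c (k + 1) = Real.sqrt (c k * (c (k - 1) - 1))) :
    ∀ k ≤ n, c k ≤ A - k / 3 := by
  have hnn : ∀ k : ℕ, 1 ≤ k → k ≤ n → 0 ≤ c k := by
    intro k hk1 hkn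
    match k with
    | 0 => omega
    | 1 => exact hc1pos.le
    | (j+2) =>
      rw [show j + 2 = (j+1) + 1 from rfl, hrec (j+1) (by omega) (by omega)]
      exact Real.sqrt_nonneg _
  intro k hk
  induction k using Nat.strong_induction_on with
  | _ k ih =>
    match k with
    | 0 => simpa using hc0
    | 1 => simpa using hc1
    | (m+2) =>
      have h1 : c (m+1) ≤ A - (m+1) / 3 := by
        have := ih (m+1) (by omega) (by omega)
        push_cast at this ⊢; linarith
      have h0 : c m ≤ A - m / 3 := ih m (by omega) (by omega)
      have hd : 1 < c m := by
        have := hdef (m+1) (by omega) (by omega)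
        simpa using this
      have hnn1 : 0 ≤ c (m+1) := hnn (m+1) (by omega) (by omega)
      have hrw := hrec (m+1) (by omega) (by omega)
      simp only [Nat.add_sub_cancel] at hrw
      rw [show m + 2 = (m+1) + 1 from rfl, hrw]
      have hT : (0:ℝ) ≤ A - (m+2) / 3 := by
        have hb : (0:ℝ) < c m - 1 := by linarith
        linarith
      have hsq : c (m+1) * (c m - 1) ≤ (A - ((m:ℝ)+2) / 3) ^ 2 := by
        have hb : (0:ℝ) ≤ c m - 1 := by linarith
        push_cast at hT
        nlinarith [sq_nonneg ((A - ((m:ℝ)+1)/3) - (A - (m:ℝ)/3 - 1)),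
          mul_le_mul h1 (show c m - 1 ≤ A - (m:ℝ)/3 - 1 by linarith) hb
            (by linarith : (0:ℝ) ≤ A - ((m:ℝ)+1)/3)]
      calc Real.sqrt (c (m+1) * (c m - 1)) ≤ Real.sqrt ((A - ((m:ℝ)+2) / 3) ^ 2) :=
            Real.sqrt_le_sqrt hsq
        _ = A - ((m:ℝ)+2) / 3 := Real.sqrt_sq (by linarith)
        _ = A - (((m:ℕ)+1+1 : ℕ):ℝ) / 3 := by push_cast; ring
end

section
/- There exists an infinite sequence (b_k)_{k≥1} of positive reals with b_2 = 1, satisfying b_{k+1} = 1 + b_{k-1}^2 / b_k for all k ≥ 2, and such that b_k ≤ k for all k ≥ 1. -/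
/-!
Let `b = forwardSeq a` be the solution with `b 1 = a`, `b 2 = 1`; from `b 2 = 1` on every term
is at least `1`, so each `b k` depends continuously on `a`. If `b` is nondecreasing, then
`b (k + 1) = 1 + b (k - 1) ^ 2 / b k ≤ 1 + b (k - 1)`, which gives `b k ≤ k`.

Nondecreasing solutions exist up to any finite length: run the recurrence backwards,
`r (j + 2) = √(r (j + 1) * (r j - 1))` from `r 0 = r 1 = s`. For `s ≥ 0` this is nonincreasing
and drops by at most `1` per step, so by the intermediate value theorem some `s` gives `r N = 1`;
read forwards, `r (N + 1), r N, …, r 0` is then a nondecreasing solution with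
`b 1 = r (N + 1) ∈ [0, 1]`.
Compactness of `[0, 1]` turns these finite solutions into an infinite one.
-/

open Set

/-- Index `0` is a junk value; the solution starts at `forwardSeq a 1 = a`. -/
noncomputable def forwardSeq (a : ℝ) : ℕ → ℝ
  | 0 => 0
  | 1 => a
  | 2 => 1
  | k + 3 => 1 + forwardSeq a (k + 1) ^ 2 / forwardSeq a (k + 2)

noncomputable def backwardSeq (s : ℝ) : ℕ → ℝ
  | 0 => s
  | 1 => s
  | j + 2 => √(backwardSeq s (j + 1) * (backwardSeq s j - 1))

namespace forwardSeq

theorem one_le (a : ℝ) : ∀ k, 1 ≤ forwardSeq a (k + 2)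
  | 0 => le_rfl
  | k + 1 => by
    have hpos : 0 < forwardSeq a (k + 2) := zero_lt_one.trans_le (one_le a k)
    simp only [forwardSeq]
    have := div_nonneg (sq_nonneg (forwardSeq a (k + 1))) hpos.le
    linarith

theorem continuous : ∀ k, Continuous fun a ↦ forwardSeq a k
  | 0 => continuous_const
  | 1 => continuous_id
  | 2 => continuous_const
  | k + 3 => by
    simp only [forwardSeq]
    exact continuous_const.add (((continuous (k + 1)).pow 2).div (continuous (k + 2))
      fun a ↦ (zero_lt_one.trans_le (one_le a k)).ne')

theorem nonneg {a : ℝ} (ha : 0 ≤ a) : ∀ k, 0 ≤ forwardSeq a k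
  | 0 => le_rfl
  | 1 => ha
  | k + 2 => zero_le_one.trans (one_le a k)

theorem le_index {a : ℝ} (ha₀ : 0 ≤ a) (ha₁ : a ≤ 1)
    (hmono : ∀ k, forwardSeq a (k + 1) ≤ forwardSeq a (k + 2)) : ∀ k, forwardSeq a k ≤ k
  | 0 => by simp [forwardSeq]
  | 1 => by simpa [forwardSeq] using ha₁
  | 2 => by norm_num [forwardSeq]
  | k + 3 => by
    have hpos : 0 < forwardSeq a (k + 2) := zero_lt_one.trans_le (one_le a k)
    have hdiv : forwardSeq a (k + 1) ^ 2 / forwardSeq a (k + 2) ≤ forwardSeq a (k + 1) :=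
      div_le_of_le_mul₀ hpos.le (nonneg ha₀ _) (by nlinarith [nonneg ha₀ (k + 1), hmono k])
    have ih := le_index ha₀ ha₁ hmono (k + 1)
    simp only [forwardSeq]
    push_cast at ih ⊢
    linarith

end forwardSeq

namespace backwardSeq

theorem continuous : ∀ j, Continuous fun s ↦ backwardSeq s j
  | 0 => continuous_id
  | 1 => continuous_id
  | j + 2 => by
    simp only [backwardSeq]
    exact Real.continuous_sqrt.comp ((continuous (j + 1)).mul ((continuous j).sub continuous_const))

theorem zero_apply : ∀ j, backwardSeq 0 j = 0
  | 0 => rfl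
  | 1 => rfl
  | j + 2 => by simp [backwardSeq, zero_apply (j + 1)]

theorem step {s : ℝ} (hs : 0 ≤ s) : ∀ j,
    0 ≤ backwardSeq s (j + 1) ∧ backwardSeq s (j + 1) ≤ backwardSeq s j ∧
      backwardSeq s j ≤ backwardSeq s (j + 1) + 1
  | 0 => ⟨hs, le_rfl, by simp [backwardSeq]⟩
  | j + 1 => by
    obtain ⟨hy₀, hyx, hxy⟩ := step hs j
    set x := backwardSeq s j
    set y := backwardSeq s (j + 1)
    have hz : backwardSeq s (j + 2) = √(y * (x - 1)) := rfl
    refine ⟨hz ▸ Real.sqrt_nonneg _, ?_, ?_⟩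
    · rw [hz, Real.sqrt_le_left hy₀]
      nlinarith
    · rcases le_or_gt y 1 with hy₁ | hy₁
      · linarith [Real.sqrt_nonneg (y * (x - 1)), hz]
      · have : y - 1 ≤ √(y * (x - 1)) := Real.le_sqrt_of_sq_le (by nlinarith)
        linarith

theorem antitone {s : ℝ} (hs : 0 ≤ s) : Antitone (backwardSeq s) :=
  antitone_nat_of_succ_le fun j ↦ (step hs j).2.1

theorem nonneg {s : ℝ} (hs : 0 ≤ s) : ∀ j, 0 ≤ backwardSeq s j
  | 0 => hs
  | j + 1 => (step hs j).1

theorem sub_le {s : ℝ} (hs : 0 ≤ s) : ∀ j : ℕ, s - j ≤ backwardSeq s j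
  | 0 => by simp [backwardSeq]
  | j + 1 => by
    have := sub_le hs j
    have := (step hs j).2.2
    push_cast
    linarith

theorem exists_eq_one (N : ℕ) : ∃ s, 0 ≤ s ∧ backwardSeq s N = 1 := by
  have hN : (0 : ℝ) ≤ N + 1 := by positivity
  have hmem : (1 : ℝ) ∈ Icc (backwardSeq 0 N) (backwardSeq (N + 1) N) :=
    ⟨by simp [zero_apply], by linarith [sub_le hN N]⟩
  obtain ⟨s, hs, hs₁⟩ := intermediate_value_Icc hN (continuous N).continuousOn hmem
  exact ⟨s, hs.1, hs₁⟩

theorem forwardSeq_eq {s : ℝ} {N : ℕ} (hs : 0 ≤ s) (hN : backwardSeq s N = 1) :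
    ∀ i j, i + j = N → forwardSeq (backwardSeq s (N + 1)) (i + 1) = backwardSeq s (j + 1) ∧
      forwardSeq (backwardSeq s (N + 1)) (i + 2) = backwardSeq s j
  | 0, j, h => by
    rw [zero_add] at h
    subst h
    exact ⟨by simp [forwardSeq], by simp [forwardSeq, hN]⟩
  | i + 1, j, h => by
    obtain ⟨h₁, h₂⟩ := forwardSeq_eq hs hN i (j + 1) (by omega)
    have hge : ∀ l ≤ N, 1 ≤ backwardSeq s l := fun l hl ↦ hN ▸ antitone hs hl
    have hpos : 0 < backwardSeq s (j + 1) := zero_lt_one.trans_le (hge _ (by omega))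
    have hsq : backwardSeq s (j + 2) ^ 2 = backwardSeq s (j + 1) * (backwardSeq s j - 1) :=
      Real.sq_sqrt (mul_nonneg hpos.le (by linarith [hge j (by omega)]))
    refine ⟨h₂, ?_⟩
    change 1 + forwardSeq _ (i + 1) ^ 2 / forwardSeq _ (i + 2) = _
    rw [h₁, h₂, hsq, mul_div_cancel_left₀ _ hpos.ne']
    ring

end backwardSeq

theorem exists_forwardSeq_monotone_upTo (N : ℕ) :
    ∃ a ∈ Icc (0 : ℝ) 1, ∀ i ≤ N, forwardSeq a (i + 1) ≤ forwardSeq a (i + 2) := by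
  obtain ⟨s, hs, hN⟩ := backwardSeq.exists_eq_one N
  refine ⟨backwardSeq s (N + 1), ⟨backwardSeq.nonneg hs _, ?_⟩, fun i hi ↦ ?_⟩
  · exact hN ▸ backwardSeq.antitone hs N.le_succ
  · obtain ⟨h₁, h₂⟩ := backwardSeq.forwardSeq_eq hs hN i (N - i) (by omega)
    rw [h₁, h₂]
    exact backwardSeq.antitone hs (N - i).le_succ

theorem exists_forwardSeq_monotone :
    ∃ a ∈ Icc (0 : ℝ) 1, ∀ k, forwardSeq a (k + 1) ≤ forwardSeq a (k + 2) := by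
  obtain ⟨a, ha, hmono⟩ := isCompact_Icc.inter_iInter_nonempty
    (fun k ↦ {a | forwardSeq a (k + 1) ≤ forwardSeq a (k + 2)})
    (fun k ↦ isClosed_le (forwardSeq.continuous _) (forwardSeq.continuous _)) fun u ↦ by
      obtain ⟨a, ha, hmono⟩ := exists_forwardSeq_monotone_upTo (u.sup id)
      exact ⟨a, ha, mem_iInter₂.2 fun k hk ↦ hmono k (u.le_sup (f := id) hk)⟩
  exact ⟨a, ha, mem_iInter.1 hmono⟩

theorem stmt_10 :
    ∃ b : ℕ → ℝ, (∀ k : ℕ, 1 ≤ k → 0 < b k) ∧ b 2 = 1 ∧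
      (∀ k : ℕ, 2 ≤ k → b (k + 1) = 1 + (b (k - 1)) ^ 2 / b k) ∧
      (∀ k : ℕ, 1 ≤ k → b k ≤ k) := by
  obtain ⟨a, ⟨ha₀, ha₁⟩, hmono⟩ := exists_forwardSeq_monotone
  -- For `a = 0` the solution starts `0, 1, 1, 2, 3/2`.
  have ha : 0 < a := ha₀.lt_of_ne fun h ↦ by
    have := hmono 3
    norm_num [← h, forwardSeq] at this
  refine ⟨forwardSeq a, fun k hk ↦ ?_, rfl, fun k hk ↦ ?_,
    fun k _ ↦ forwardSeq.le_index ha₀ ha₁ hmono k⟩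
  · obtain _ | _ | k := k
    · omega
    · exact ha
    · exact zero_lt_one.trans_le (forwardSeq.one_le a k)
  · obtain ⟨k, rfl⟩ := Nat.exists_eq_add_of_le' hk
    rfl
end

section
/- Let u > 1. There exists an infinite sequence (b_k)_{k≥1} of positive reals with b_2 = 1, satisfying b_k b_{k+1} = b_k + u b_{k-1}^2 for all k ≥ 2, and such that b_{k+1} ≤ (u^{k/3} - 1)/(u^{1/3} - 1) for all k ≥ 1. -/
/-!
Write `u = t ^ 3` and shoot in `x = b 1`. If `e k = b (k + 1) - t * b k ≥ 0`, then
`u * b k ^ 2 / b (k + 1) ≤ t * b (k + 1)`, so `b (k + 2) ≤ 1 + t * b (k + 1)`; hence a solution with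
all `e k ≥ 0` is bounded by the geometric sums `1 + t + ⋯ + t ^ (k - 1) = (u ^ (k/3) - 1)/(u ^ (1/3) - 1)`.
Such an `x` exists: `e k = 0` forces `e (k + 1) = 1` and then `e (k + 2) ≤ 0`, so taking first zeros
(intermediate value theorem) yields nested intervals of `x` on which `e 1, …, e n ≥ 0`, and a compactness
argument gives an `x` that works for every `n`.
-/

open Set

theorem rpow_natCast_div_three {t : ℝ} (ht : 0 ≤ t) (k : ℕ) : (t ^ 3) ^ ((k : ℝ) / 3) = t ^ k := by
  rw [← Real.rpow_natCast_mul ht, Nat.cast_ofNat, mul_div_cancel₀ _ three_ne_zero,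
    Real.rpow_natCast]

theorem exists_eq_zero_forall_nonneg_uIcc {f : ℝ → ℝ} {a b : ℝ} (hf : ContinuousOn f (uIcc a b))
    (ha : 0 < f a) (hb : f b ≤ 0) : ∃ c ∈ uIcc a b, f c = 0 ∧ ∀ y ∈ uIcc a c, 0 ≤ f y := by
  set S := uIcc a b ∩ f ⁻¹' Iic 0
  have hS : IsCompact S := isCompact_uIcc.of_isClosed_subset
    (hf.preimage_isClosed_of_isClosed isClosed_Icc isClosed_Iic) inter_subset_left
  -- `c` is the point of `{f ≤ 0}` nearest to `a`
  obtain ⟨c, ⟨hc, hfc⟩, hmin⟩ :=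
    hS.exists_isMinOn ⟨b, right_mem_uIcc, hb⟩ (continuous_id.dist continuous_const).continuousOn
  have hsub : uIcc a c ⊆ uIcc a b := uIcc_subset_uIcc left_mem_uIcc hc
  have eq_of_mem : ∀ y ∈ uIcc a c, f y ≤ 0 → y = c := fun y hy hfy => by
    have hdist : dist c a ≤ dist y a := hmin ⟨hsub hy, hfy⟩
    rw [Real.dist_eq, Real.dist_eq] at hdist
    rcases mem_uIcc.1 hy with ⟨h₁, h₂⟩ | ⟨h₁, h₂⟩
    · rw [abs_of_nonneg (by linarith), abs_of_nonneg (by linarith)] at hdist; linarith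
    · rw [abs_of_nonpos (by linarith), abs_of_nonpos (by linarith)] at hdist; linarith
  have hc0 : f c = 0 := by
    obtain ⟨w, hw, hfw⟩ :=
      intermediate_value_uIcc (hf.mono hsub) (mem_uIcc.2 (Or.inr ⟨hfc, ha.le⟩))
    rw [← eq_of_mem w hw hfw.le, hfw]
  refine ⟨c, hc, hc0, fun y hy => le_of_not_gt fun hfy => ?_⟩
  rw [eq_of_mem y hy hfy.le, hc0] at hfy
  exact lt_irrefl 0 hfy

namespace QuadraticRecurrence

/-- The solution with `b 1 = x`, the shooting parameter; `b 0 = 0` is a placeholder. -/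
noncomputable def bseq (u x : ℝ) : ℕ → ℝ
  | 0 => 0
  | 1 => x
  | 2 => 1
  | k + 3 => 1 + u * bseq u x (k + 1) ^ 2 / bseq u x (k + 2)

variable {u t x : ℝ}

theorem bseq_add_three (u x : ℝ) (k : ℕ) :
    bseq u x (k + 3) = 1 + u * bseq u x (k + 1) ^ 2 / bseq u x (k + 2) := rfl

theorem one_le_bseq (hu : 0 ≤ u) : ∀ k, 2 ≤ k → 1 ≤ bseq u x k
  | 2, _ => le_rfl
  | k + 3, _ => by
    have hb := one_le_bseq hu (k + 2) (by omega)
    rw [bseq_add_three]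
    have : 0 ≤ u * bseq u x (k + 1) ^ 2 / bseq u x (k + 2) := by positivity
    linarith

theorem bseq_pos (hu : 0 ≤ u) (hx : 0 < x) {k : ℕ} (hk : 1 ≤ k) : 0 < bseq u x k := by
  obtain rfl | hk := hk.eq_or_lt
  · exact hx
  · exact one_pos.trans_le (one_le_bseq hu k hk)

theorem bseq_mul_bseq_succ (hu : 0 ≤ u) {k : ℕ} (hk : 2 ≤ k) :
    bseq u x k * bseq u x (k + 1) = bseq u x k + u * bseq u x (k - 1) ^ 2 := by
  obtain ⟨m, rfl⟩ := Nat.exists_eq_add_of_le' hk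
  have hb := one_le_bseq (x := x) hu (m + 2) (by omega)
  rw [bseq_add_three, show m + 2 - 1 = m + 1 by omega]
  field_simp

theorem continuous_bseq (hu : 0 ≤ u) : ∀ k, Continuous fun x => bseq u x k
  | 0 => continuous_const
  | 1 => continuous_id
  | 2 => continuous_const
  | k + 3 =>
    continuous_const.add <| (continuous_const.mul ((continuous_bseq hu (k + 1)).pow 2)).div
      (continuous_bseq hu (k + 2)) fun _ => (one_pos.trans_le (one_le_bseq hu _ le_add_self)).ne'

/-- `e k = b (k + 1) - t * b k` for `u = t ^ 3`. -/
noncomputable def gap (t x : ℝ) (k : ℕ) : ℝ := bseq (t ^ 3) x (k + 1) - t * bseq (t ^ 3) x k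

theorem gap_one : gap t x 1 = 1 - t * x := by simp [gap, bseq]

theorem gap_two : gap t x 2 = 1 + t ^ 3 * x ^ 2 - t := by simp [gap, bseq]

theorem continuous_gap (ht : 0 ≤ t) (k : ℕ) : Continuous fun x => gap t x k :=
  (continuous_bseq (by positivity) _).sub (continuous_const.mul (continuous_bseq (by positivity) _))

theorem gap_add_two_eq_one (ht : 0 ≤ t) {k : ℕ} (h : gap t x (k + 1) = 0) :
    gap t x (k + 2) = 1 := by
  have hb : 1 ≤ bseq (t ^ 3) x (k + 2) := one_le_bseq (by positivity) _ le_add_self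
  have hrec : bseq (t ^ 3) x (k + 2) = t * bseq (t ^ 3) x (k + 1) := by
    unfold gap at h; linarith
  have ha : t * bseq (t ^ 3) x (k + 1) ≠ 0 := by rw [← hrec]; positivity
  unfold gap
  rw [bseq_add_three, hrec]
  field_simp
  ring

theorem gap_add_two_nonpos (ht : 1 ≤ t) {k : ℕ} (h : gap t x (k + 1) = 1) :
    gap t x (k + 2) ≤ 0 := by
  have hb : 1 ≤ bseq (t ^ 3) x (k + 2) := one_le_bseq (by positivity) _ le_add_self
  have hrec : bseq (t ^ 3) x (k + 2) = t * bseq (t ^ 3) x (k + 1) + 1 := by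
    unfold gap at h; linarith
  set a := bseq (t ^ 3) x (k + 1)
  have hta : 0 ≤ t * a := by linarith
  unfold gap
  rw [bseq_add_three, hrec]
  have key : t ^ 3 * a ^ 2 / (t * a + 1) ≤ t * (t * a + 1) - 1 := by
    rw [div_le_iff₀ (by linarith)]
    nlinarith
  linarith

theorem bseq_add_three_le (ht : 0 ≤ t) (hx : 0 < x) {k : ℕ} (h : 0 ≤ gap t x (k + 1)) :
    bseq (t ^ 3) x (k + 3) ≤ 1 + t * bseq (t ^ 3) x (k + 2) := by
  have hu : 0 ≤ t ^ 3 := by positivity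
  have ha := (bseq_pos hu hx (le_add_self : 1 ≤ k + 1)).le
  have hb := bseq_pos hu hx (by omega : 1 ≤ k + 2)
  have hrec : t * bseq (t ^ 3) x (k + 1) ≤ bseq (t ^ 3) x (k + 2) := by
    unfold gap at h; linarith
  have key : t ^ 3 * bseq (t ^ 3) x (k + 1) ^ 2 / bseq (t ^ 3) x (k + 2)
      ≤ t * bseq (t ^ 3) x (k + 2) := by
    rw [div_le_iff₀ hb]
    nlinarith [mul_le_mul hrec hrec (by positivity) hb.le]
  rw [bseq_add_three]
  linarith

theorem bseq_succ_le_geom_sum (ht : 0 ≤ t) (hx : 0 < x) (h : ∀ j, 1 ≤ j → 0 ≤ gap t x j)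
    {k : ℕ} (hk : 1 ≤ k) : bseq (t ^ 3) x (k + 1) ≤ ∑ i ∈ Finset.range k, t ^ i := by
  induction k, hk using Nat.le_induction with
  | base => simp [bseq]
  | succ k hk ih =>
    obtain ⟨m, rfl⟩ := Nat.exists_eq_add_of_le' hk
    rw [geom_sum_succ]
    calc bseq (t ^ 3) x (m + 1 + 1 + 1) ≤ 1 + t * bseq (t ^ 3) x (m + 2) :=
          bseq_add_three_le ht hx (h _ le_add_self)
      _ ≤ _ := by nlinarith

/-- Shooting in `x = b 1`: `e (n + 1)` vanishes at `p`, so `e (n + 2)` is `1` at `p` and `≤ 0` at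
`q`, and its first zero between them gives the next, smaller interval. -/
theorem exists_gap_eq_zero (ht : 1 ≤ t) (n : ℕ) :
    ∃ p q, 0 ≤ p ∧ 0 ≤ q ∧ gap t p (n + 1) = 0 ∧ gap t q (n + 2) ≤ 0 ∧
      ∀ y ∈ uIcc p q, ∀ j, 1 ≤ j → j ≤ n + 1 → 0 ≤ gap t y j := by
  induction n with
  | zero =>
    refine ⟨t⁻¹, 0, by positivity, le_rfl, ?_, ?_, fun y hy j hj₁ hj₂ => ?_⟩
    · rw [gap_one, mul_inv_cancel₀ (by positivity), sub_self]
    · rw [gap_two]; simp [ht]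
    · obtain rfl : j = 1 := by omega
      rw [uIcc_of_ge (by positivity), mem_Icc] at hy
      rw [gap_one, sub_nonneg, ← le_div_iff₀' (by positivity), one_div]
      exact hy.2
  | succ n ih =>
    obtain ⟨p, q, hp, hq, hp₀, hq₀, hpq⟩ := ih
    have hp₁ : gap t p (n + 2) = 1 := gap_add_two_eq_one (by positivity) hp₀
    obtain ⟨z, hz, hz₀, hz_nonneg⟩ := exists_eq_zero_forall_nonneg_uIcc
      (continuous_gap (by positivity) _).continuousOn (hp₁ ▸ one_pos) hq₀
    refine ⟨z, p, (le_inf hp hq).trans hz.1, hp, hz₀, gap_add_two_nonpos ht hp₁,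
      fun y hy j hj₁ hj₂ => ?_⟩
    rw [uIcc_comm] at hy
    rcases (by omega : j ≤ n + 1 ∨ j = n + 2) with hj | rfl
    · exact hpq y (uIcc_subset_uIcc left_mem_uIcc hz hy) j hj₁ hj
    · exact hz_nonneg y hy

theorem exists_forall_gap_nonneg (ht : 1 < t) : ∃ x, 0 < x ∧ ∀ j, 1 ≤ j → 0 ≤ gap t x j := by
  set G : ℕ → Set ℝ := fun n => {x | ∀ j, 1 ≤ j → j ≤ n + 1 → 0 ≤ gap t x j}
  have hG : ∀ n, IsClosed (G n) := fun n => by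
    simp only [G, ofPred_forall]
    exact isClosed_iInter fun j => isClosed_iInter fun _ => isClosed_iInter fun _ =>
      isClosed_le continuous_const (continuous_gap (by positivity) j)
  have hK : ∀ n, (Icc 0 t⁻¹ ∩ G n).Nonempty := fun n => by
    obtain ⟨p, q, hp, -, -, -, hpq⟩ := exists_gap_eq_zero ht.le n
    have hgap_one := hpq p left_mem_uIcc 1 le_rfl (by omega)
    rw [gap_one, sub_nonneg, ← le_div_iff₀' (by positivity), one_div] at hgap_one
    exact ⟨p, ⟨hp, hgap_one⟩, hpq p left_mem_uIcc⟩
  obtain ⟨x, hx⟩ := IsCompact.nonempty_iInter_of_sequence_nonempty_isCompact_isClosed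
    (fun n => Icc 0 t⁻¹ ∩ G n)
    (fun n x hx => ⟨hx.1, fun j hj₁ hj₂ => hx.2 j hj₁ (by omega)⟩) hK
    (isCompact_Icc.inter_right (hG 0)) fun n => isClosed_Icc.inter (hG n)
  rw [mem_iInter] at hx
  have hgap : ∀ j, 1 ≤ j → 0 ≤ gap t x j := fun j hj => (hx j).2 j hj (by omega)
  refine ⟨x, (hx 0).1.1.lt_of_ne fun hx₀ => ?_, hgap⟩
  have hgap_two := hgap 2 (by omega)
  rw [gap_two, ← hx₀] at hgap_two
  linarith

end QuadraticRecurrence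

open QuadraticRecurrence in
theorem stmt_13 (u : ℝ) (hu : 1 < u) :
    ∃ b : ℕ → ℝ, (∀ k : ℕ, 1 ≤ k → 0 < b k) ∧ b 2 = 1 ∧
      (∀ k : ℕ, 2 ≤ k → b k * b (k + 1) = b k + u * (b (k - 1)) ^ 2) ∧
      (∀ k : ℕ, 1 ≤ k → b (k + 1) ≤ (u ^ ((k : ℝ) / 3) - 1) / (u ^ ((1 : ℝ) / 3) - 1)) := by
  obtain ⟨t, ht, rfl⟩ : ∃ t : ℝ, 1 < t ∧ t ^ 3 = u :=
    ⟨u ^ ((3 : ℕ)⁻¹ : ℝ), Real.one_lt_rpow hu (by norm_num),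
      Real.rpow_inv_natCast_pow (by linarith) three_ne_zero⟩
  have hu₀ : 0 ≤ t ^ 3 := by positivity
  obtain ⟨x, hx, hgap⟩ := exists_forall_gap_nonneg ht
  refine ⟨bseq (t ^ 3) x, fun k hk => bseq_pos hu₀ hx hk, rfl,
    fun k hk => bseq_mul_bseq_succ hu₀ hk, fun k hk => ?_⟩
  have hcube_root : (t ^ 3) ^ ((1 : ℝ) / 3) = t := by
    simpa using rpow_natCast_div_three (by positivity) 1
  rw [rpow_natCast_div_three (by positivity), hcube_root, ← geom_sum_eq ht.ne']
  exact bseq_succ_le_geom_sum (by positivity) hx hgap hk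
end

section
/- Let A be a measurable subset of ℝ and let 𝓘 be a family of open intervals in ℝ of uniformly bounded length such that for every a ∈ A there is b > a with (a,b) ∈ 𝓘. Then there exists a finite or countable pairwise disjoint subfamily {(a_k, b_k)} of 𝓘 with |A| ≤ 2 Σ_k (b_k - a_k). -/
/-!
On a compact set `K`, choose intervals greedily and transfinitely (Zorn): always take an
interval of `𝓘` starting at the least point of `K` that does not yet lie below a chosen right
endpoint. The chosen intervals are disjoint and their half-open versions `[a, b)` cover `K`, so
`|K| ≤ Σ (b - a)`. Inner regularity then gives the case `|A| < ∞`, with the factor `2` to spare.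
If `|A| = ∞`, cut `ℝ` into blocks of length `w ≥ sup (b - a)`; the blocks of one parity carry
infinite measure, and families chosen in different blocks of that parity are disjoint because
an interval starting in a block ends before the next-but-one block.
-/

open MeasureTheory Set
open scoped ENNReal

section Order

variable {α : Type*} [LinearOrder α]

theorem countable_of_pairwiseDisjoint_Ioo [DenselyOrdered α] [TopologicalSpace α]
    [OrderClosedTopology α] [TopologicalSpace.SeparableSpace α] {S : Set (α × α)}
    (hS : S.PairwiseDisjoint fun p => Ioo p.1 p.2) (hord : ∀ p ∈ S, p.1 < p.2) :
    S.Countable :=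
  hS.countable_of_isOpen (fun _ _ => isOpen_Ioo) fun p hp => nonempty_Ioo.2 (hord p hp)

def IsPrefixCover (I : Set (α × α)) (K : Set α) (S : Set (α × α)) : Prop :=
  S ⊆ I ∧ (∀ p ∈ S, p.1 ∈ K) ∧ (S.PairwiseDisjoint fun p => Ioo p.1 p.2) ∧
    K ∩ ⋃ p ∈ S, Iio p.2 ⊆ ⋃ p ∈ S, Ico p.1 p.2

theorem isPrefixCover_sUnion {I : Set (α × α)} {K : Set α} {c : Set (Set (α × α))}
    (hc : ∀ S ∈ c, IsPrefixCover I K S) (hchain : IsChain (· ⊆ ·) c) :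
    IsPrefixCover I K (⋃₀ c) := by
  refine ⟨sUnion_subset fun S hS => (hc S hS).1, fun p ⟨S, hS, hp⟩ => (hc S hS).2.1 p hp,
    ?_, ?_⟩
  · rintro p ⟨S, hS, hp⟩ q ⟨T, hT, hq⟩ hpq
    obtain hST | hTS := hchain.total hS hT
    · exact (hc T hT).2.2.1 (hST hp) hq hpq
    · exact (hc S hS).2.2.1 hp (hTS hq) hpq
  · rintro z ⟨hzK, hz⟩
    obtain ⟨p, ⟨S, hS, hp⟩, hzp⟩ := mem_iUnion₂.1 hz
    obtain ⟨q, hq, hzq⟩ := mem_iUnion₂.1 <| (hc S hS).2.2.2 ⟨hzK, mem_iUnion₂.2 ⟨p, hp, hzp⟩⟩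
    exact mem_iUnion₂.2 ⟨q, ⟨S, hS, hq⟩, hzq⟩

theorem IsPrefixCover.insert {I : Set (α × α)} {K : Set α} {S : Set (α × α)}
    (hS : IsPrefixCover I K S) {m b : α}
    (hm : IsLeast (K ∩ ⋂ p ∈ S, Ici p.2) m) (hI : (m, b) ∈ I) :
    IsPrefixCover I K (insert (m, b) S) := by
  obtain ⟨hSI, hSK, hSdisj, hScov⟩ := hS
  obtain ⟨⟨hmK, hmS⟩, hmin⟩ := hm
  rw [mem_iInter₂] at hmS
  refine ⟨insert_subset hI hSI, forall_mem_insert.2 ⟨hmK, hSK⟩, ?_, ?_⟩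
  · refine hSdisj.insert fun q hq _ => disjoint_left.2 fun x hxm hxq => ?_
    exact (hxq.2.trans_le (hmS q hq)).not_gt hxm.1
  · rintro z ⟨hzK, hz⟩
    simp only [biUnion_insert, mem_union] at hz ⊢
    by_cases hzS : z ∈ ⋃ p ∈ S, Iio p.2
    · exact Or.inr (hScov ⟨hzK, hzS⟩)
    · refine Or.inl ⟨hmin ⟨hzK, ?_⟩, hz.resolve_right hzS⟩
      simpa using hzS

theorem IsCompact.exists_pairwiseDisjoint_Ioo_cover_Ico [TopologicalSpace α]
    [OrderClosedTopology α] {K : Set α} (hK : IsCompact K) {I : Set (α × α)}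
    (hcov : ∀ a ∈ K, ∃ b, a < b ∧ (a, b) ∈ I) :
    ∃ S ⊆ I, (∀ p ∈ S, p.1 ∈ K) ∧ (S.PairwiseDisjoint fun p => Ioo p.1 p.2) ∧
      K ⊆ ⋃ p ∈ S, Ico p.1 p.2 := by
  obtain ⟨S, hS⟩ := zorn_subset {S | IsPrefixCover I K S} fun c hc hchain =>
    ⟨⋃₀ c, isPrefixCover_sUnion hc hchain, fun _ => subset_sUnion_of_mem⟩
  obtain ⟨hSI, hSK, hSdisj, hScov⟩ := hS.prop
  refine ⟨S, hSI, hSK, hSdisj, ?_⟩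
  rcases (K ∩ ⋂ p ∈ S, Ici p.2).eq_empty_or_nonempty with hR | hR
  · intro z hzK
    refine hScov ⟨hzK, ?_⟩
    have hzR : z ∉ K ∩ ⋂ p ∈ S, Ici p.2 := hR ▸ notMem_empty z
    simpa [hzK] using hzR
  · obtain ⟨m, hm⟩ := (hK.inter_right <| isClosed_biInter fun p _ => isClosed_Ici).exists_isLeast hR
    obtain ⟨b, hmb, hbI⟩ := hcov m hm.1.1
    have hmbS : (m, b) ∈ S := hS.mem_of_prop_insert (hS.prop.insert hm hbI)
    exact absurd (mem_iInter₂.1 hm.1.2 _ hmbS) (not_le.2 hmb)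

end Order

theorem volume_biUnion_Ioo {S : Set (ℝ × ℝ)} (hS : S.PairwiseDisjoint fun p => Ioo p.1 p.2)
    (hord : ∀ p ∈ S, p.1 < p.2) :
    volume (⋃ p ∈ S, Ioo p.1 p.2) = ∑' p : S, ENNReal.ofReal ((p : ℝ × ℝ).2 - (p : ℝ × ℝ).1) := by
  rw [measure_biUnion (countable_of_pairwiseDisjoint_Ioo hS hord) hS fun _ _ => measurableSet_Ioo]
  simp only [Real.volume_Ioo]

theorem volume_biUnion_Ico_le {S : Set (ℝ × ℝ)} (hS : S.PairwiseDisjoint fun p => Ioo p.1 p.2)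
    (hord : ∀ p ∈ S, p.1 < p.2) :
    volume (⋃ p ∈ S, Ico p.1 p.2) ≤ volume (⋃ p ∈ S, Ioo p.1 p.2) := by
  rw [volume_biUnion_Ioo hS hord]
  refine (measure_biUnion_le _ (countable_of_pairwiseDisjoint_Ioo hS hord) _).trans_eq ?_
  simp only [Real.volume_Ico]

theorem exists_pairwiseDisjoint_volume_le_two_mul_of_ne_top {A : Set ℝ} (hA : MeasurableSet A)
    (hfin : volume A ≠ ∞) {I : Set (ℝ × ℝ)} (hord : ∀ p ∈ I, p.1 < p.2)
    (hcov : ∀ a ∈ A, ∃ b, a < b ∧ (a, b) ∈ I) :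
    ∃ S ⊆ I, (∀ p ∈ S, p.1 ∈ A) ∧ (S.PairwiseDisjoint fun p => Ioo p.1 p.2) ∧
      volume A ≤ 2 * volume (⋃ p ∈ S, Ioo p.1 p.2) := by
  rcases eq_or_ne (volume A) 0 with h0 | h0
  · exact ⟨∅, empty_subset _, by simp, pairwiseDisjoint_empty, by simp [h0]⟩
  obtain ⟨K, hKA, hK, hAK⟩ := hA.exists_lt_isCompact_of_ne_top hfin (ENNReal.half_lt_self h0 hfin)
  obtain ⟨S, hSI, hSK, hSdisj, hKS⟩ :=
    hK.exists_pairwiseDisjoint_Ioo_cover_Ico fun a ha => hcov a (hKA ha)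
  refine ⟨S, hSI, fun p hp => hKA (hSK p hp), hSdisj, ?_⟩
  rw [← ENNReal.div_le_iff' two_ne_zero ENNReal.ofNat_ne_top]
  calc volume A / 2 ≤ volume K := hAK.le
    _ ≤ volume (⋃ p ∈ S, Ico p.1 p.2) := measure_mono hKS
    _ ≤ volume (⋃ p ∈ S, Ioo p.1 p.2) := volume_biUnion_Ico_le hSdisj fun p hp => hord p (hSI hp)

theorem tsum_measure_inter_Ico_mul (μ : Measure ℝ) {A : Set ℝ} (hA : MeasurableSet A)
    {w : ℝ} (hw : 0 < w) : ∑' n : ℤ, μ (A ∩ Ico (n * w) ((n + 1) * w)) = μ A := by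
  have hdisj := pairwise_disjoint_Ico_zsmul w
  have hcov := iUnion_Ico_zsmul hw
  simp only [zsmul_eq_mul, Int.cast_add, Int.cast_one] at hdisj hcov
  rw [← measure_iUnion (fun m n hmn => (hdisj hmn).mono inter_subset_right inter_subset_right)
    fun n => hA.inter measurableSet_Ico, ← inter_iUnion, hcov, inter_univ]

theorem ENNReal.exists_tsum_subtype_eq_top_of_no_consecutive {g : ℤ → ℝ≥0∞} (h : ∑' n, g n = ∞) :
    ∃ P : Set ℤ, (∀ n ∈ P, n + 1 ∉ P) ∧ ∑' n : P, g n = ∞ := by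
  rw [← ENNReal.summable.tsum_add_tsum_compl (s := {n | Even n}) ENNReal.summable,
    ENNReal.add_eq_top] at h
  rcases h with h | h
  · exact ⟨_, fun n hn hn1 => Int.even_add_one.1 hn1 hn, h⟩
  · exact ⟨_, fun n (hn : ¬Even n) (hn1 : ¬Even (n + 1)) => hn1 (Int.even_add_one.2 hn), h⟩

theorem exists_pairwiseDisjoint_volume_eq_top {A : Set ℝ} (hA : MeasurableSet A)
    (htop : volume A = ∞) {I : Set (ℝ × ℝ)} {w : ℝ} (hw : 0 < w)
    (hlen : ∀ p ∈ I, p.2 - p.1 ≤ w) (hord : ∀ p ∈ I, p.1 < p.2)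
    (hcov : ∀ a ∈ A, ∃ b, a < b ∧ (a, b) ∈ I) :
    ∃ S ⊆ I, (S.PairwiseDisjoint fun p => Ioo p.1 p.2) ∧
      volume (⋃ p ∈ S, Ioo p.1 p.2) = ∞ := by
  obtain ⟨P, hP, hPtop⟩ := ENNReal.exists_tsum_subtype_eq_top_of_no_consecutive
    ((tsum_measure_inter_Ico_mul volume hA hw).trans htop)
  have hfin (n : ℤ) : volume (A ∩ Ico (n * w) ((n + 1) * w)) ≠ ∞ :=
    ne_top_of_le_ne_top (by simp) (measure_mono inter_subset_right)
  choose S hSI hSA hSdisj hAS using fun n : ℤ =>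
    exists_pairwiseDisjoint_volume_le_two_mul_of_ne_top (hA.inter measurableSet_Ico) (hfin n)
      hord fun a ha => hcov a ha.1
  have hloc (n : ℤ) : ⋃ p ∈ S n, Ioo p.1 p.2 ⊆ Ioo (n * w) ((n + 2) * w) :=
    iUnion₂_subset fun p hp => Ioo_subset_Ioo (hSA n p hp).2.1 (by
      linarith [hlen p (hSI n hp), (hSA n p hp).2.2])
  have hPdisj : P.PairwiseDisjoint fun n => ⋃ p ∈ S n, Ioo p.1 p.2 := by
    intro n hn m hm hnm
    wlog hlt : n < m generalizing n m
    · exact (this hm hn hnm.symm (lt_of_le_of_ne (not_lt.1 hlt) hnm.symm)).symm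
    have hgap : n + 2 ≤ m := by
      rcases (show m = n + 1 ∨ n + 2 ≤ m by omega) with rfl | h
      exacts [absurd hm (hP n hn), h]
    refine (Iio_disjoint_Ici ?_).mono ((hloc n).trans Ioo_subset_Iio_self)
      ((hloc m).trans (Ioo_subset_Ioi_self.trans Ioi_subset_Ici_self))
    exact mul_le_mul_of_nonneg_right (by exact_mod_cast hgap) hw.le
  refine ⟨⋃ n ∈ P, S n, iUnion₂_subset fun n _ => hSI n, hPdisj.biUnion fun n _ => hSdisj n, ?_⟩
  simp only [biUnion_iUnion]
  rw [measure_biUnion P.to_countable hPdisj fun n _ =>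
    (isOpen_biUnion fun _ _ => isOpen_Ioo).measurableSet]
  have h2 : 2 * ∑' n : P, volume (⋃ p ∈ S n, Ioo p.1 p.2) = ∞ := top_le_iff.1 <|
    calc ∞ = ∑' n : P, volume (A ∩ Ico (n * w) ((n + 1) * w)) := hPtop.symm
      _ ≤ ∑' n : P, 2 * volume (⋃ p ∈ S n, Ioo p.1 p.2) := ENNReal.tsum_le_tsum fun n => hAS n
      _ = 2 * ∑' n : P, volume (⋃ p ∈ S n, Ioo p.1 p.2) := ENNReal.tsum_mul_left
  simpa [ENNReal.mul_eq_top] using h2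

theorem stmt_15 (A : Set ℝ) (hA : MeasurableSet A) (I : Set (ℝ × ℝ))
    (hlen : ∃ M : ℝ, ∀ p ∈ I, p.2 - p.1 ≤ M)
    (hord : ∀ p ∈ I, p.1 < p.2)
    (hcov : ∀ a ∈ A, ∃ b : ℝ, a < b ∧ (a, b) ∈ I) :
    ∃ S : Set (ℝ × ℝ), S ⊆ I ∧ S.Countable ∧
      (S.PairwiseDisjoint fun p => Set.Ioo p.1 p.2) ∧
      MeasureTheory.volume A ≤ 2 * ∑' p : S, ENNReal.ofReal ((p : ℝ × ℝ).2 - (p : ℝ × ℝ).1) := by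
  suffices ∃ S ⊆ I, (S.PairwiseDisjoint fun p => Ioo p.1 p.2) ∧
      volume A ≤ 2 * volume (⋃ p ∈ S, Ioo p.1 p.2) by
    obtain ⟨S, hSI, hSdisj, hAS⟩ := this
    have hSord : ∀ p ∈ S, p.1 < p.2 := fun p hp => hord p (hSI hp)
    exact ⟨S, hSI, countable_of_pairwiseDisjoint_Ioo hSdisj hSord, hSdisj,
      volume_biUnion_Ioo hSdisj hSord ▸ hAS⟩
  rcases eq_or_ne (volume A) ∞ with htop | hfin
  · obtain ⟨M, hM⟩ := hlen
    obtain ⟨S, hSI, hSdisj, hS⟩ := exists_pairwiseDisjoint_volume_eq_top hA htop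
      (lt_max_of_lt_right one_pos) (fun p hp => (hM p hp).trans (le_max_left M 1)) hord hcov
    exact ⟨S, hSI, hSdisj, by simp [hS]⟩
  · obtain ⟨S, hSI, -, hSdisj, hAS⟩ :=
      exists_pairwiseDisjoint_volume_le_two_mul_of_ne_top hA hfin hord hcov
    exact ⟨S, hSI, hSdisj, hAS⟩
end
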